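/- With the notation of the recursive Wick difference system, the difference between the discrete Wick power and its Euler counterpart has Walsh decomposition (1/k!)(B^{H,n}_{l/n})^{⋄ₙ k} − (1/k!)U^{k,n}_l = Σ_{C⊆{1,…,l},|C|=k} (Σ_{m:C→{1,…,l} not injective} ∏_{p∈C} d^n_{m(p),p}) Ξ^n_C; the key identity is that Σ over all maps m:C→{1,…,l} of ∏_{p∈C} d^n_{m(p),p} equals b^n_{l/n,C} because each coordinate sum telescopes: Σ_{m=1}^l d^n_{m,p} = b^n_{l/n,p}. -/

import Mathlib

/-!
Everything is compared coefficientwise in the Walsh basis. The walk `B_l` and the increments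
are first-chaos elements, and a Wick product with `∑ c_i ξ_i` removes one index at a time, so
the `C`-coefficient of `B_l^{⋄k}` is `k! ∏_{p ∈ C} b_{l,p}` when `|C| = k`. By induction on
`l`, the `C`-coefficient of `U^k_l` is `k!` times the sum of `∏_{p ∈ C} d_{m(p),p}` over the
injective `m : C → {1,…,l}`: a new step `l + 1` is either not hit by `m`, or hit by exactly one
`p`. Since `∑_{m=1}^l d_{m,p}` telescopes to `b_{l,p}`, expanding `∏_p b_{l,p}` gives the same
sum over all maps, and the difference is the sum over the non-injective ones. Finally
`d_{m,p} = 0` for `m ≤ p`, which kills every coefficient with `C ⊄ {0,…,l-1}`.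
-/

open Finset
open scoped Classical

/-- The discrete Wick product on Walsh coefficients. -/
noncomputable def wickProd {n : ℕ} (x y : Finset (Fin n) → ℝ) : Finset (Fin n) → ℝ :=
  fun C => ∑ A : Finset (Fin n), ∑ B : Finset (Fin n),
    if A ∪ B = C ∧ Disjoint A B then x A * y B else 0

/-- Iterated discrete Wick powers on Walsh coefficients. -/
noncomputable def wickPowC {n : ℕ} (x : Finset (Fin n) → ℝ) : ℕ → Finset (Fin n) → ℝ
  | 0 => fun C => if C = ∅ then 1 else 0
  | k + 1 => wickProd (wickPowC x k) x

/-- Walsh coefficients of the walk `B^{H,n}_{l/n} = Σ_{i=1}^{l} b_i ξ_i`. -/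
noncomputable def walkC {n : ℕ} (b : Fin n → ℝ) (l : ℕ) : Finset (Fin n) → ℝ :=
  fun C => ∑ i : Fin n, if C = {i} ∧ (i : ℕ) < l then b i else 0

/-- Walsh coefficients of the increment `Σ_i d^n_{l,i} ξ_i`. -/
noncomputable def deltaC {n : ℕ} (d : ℕ → Fin n → ℝ) (l : ℕ) : Finset (Fin n) → ℝ :=
  fun C => ∑ i : Fin n, if C = {i} then d l i else 0

/-- Walsh coefficients of the Euler scheme `U^{k,n}_l` (`Ueuler d l k` is `U^{k,n}_l`). -/
noncomputable def Ueuler {n : ℕ} (d : ℕ → Fin n → ℝ) : ℕ → ℕ → Finset (Fin n) → ℝ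
  | 0 => fun k C => if k = 0 then (if C = ∅ then 1 else 0) else 0
  | l + 1 => fun k C =>
      match k with
      | 0 => if C = ∅ then 1 else 0
      | k + 1 =>
          Ueuler d l (k + 1) C +
            ((k : ℝ) + 1) * wickProd (Ueuler d l k) (deltaC d (l + 1)) C

theorem union_singleton_eq_and_disjoint_iff {α : Type*} [DecidableEq α] {C A : Finset α}
    {i : α} :
    (A ∪ {i} = C ∧ Disjoint A {i}) ↔ (i ∈ C ∧ A = C.erase i) := by
  rw [union_comm, ← insert_eq, disjoint_singleton_right]
  constructor
  · rintro ⟨rfl, hi⟩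
    exact ⟨mem_insert_self i A, (erase_insert hi).symm⟩
  · rintro ⟨hi, rfl⟩
    exact ⟨insert_erase hi, notMem_erase i C⟩

section InjectiveSums

variable {α β R : Type*} [Fintype α] [DecidableEq α] [Inhabited β] [CommSemiring R]

/-- A non-dependent model of `C.pi fun _ => t`: functions with values in `t` on `C`, extended by
`default` off `C`. -/
noncomputable def piOn (C : Finset α) (t : Finset β) : Finset (α → β) :=
  Fintype.piFinset fun i => if i ∈ C then t else {default}

theorem mem_piOn {C : Finset α} {t : Finset β} {f : α → β} :
    f ∈ piOn C t ↔ (∀ i ∈ C, f i ∈ t) ∧ ∀ i ∉ C, f i = default := by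
  simp only [piOn, Fintype.mem_piFinset]
  constructor
  · intro h
    exact ⟨fun i hi => by simpa [hi] using h i, fun i hi => by simpa [hi] using h i⟩
  · rintro ⟨hC, hnC⟩ i
    by_cases hi : i ∈ C
    · simpa [hi] using hC i hi
    · simpa [hi] using hnC i hi

theorem sum_pi_eq_sum_piOn {M : Type*} [AddCommMonoid M] (C : Finset α) (t : Finset β)
    (F : (∀ a ∈ C, β) → M) :
    ∑ m ∈ C.pi (fun _ => t), F m = ∑ f ∈ piOn C t, F (fun a _ => f a) := by
  refine sum_nbij' (fun m i => if h : i ∈ C then m i h else default) (fun f a _ => f a)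
    (fun m hm => ?_) (fun f hf => ?_) (fun m _ => ?_) (fun f hf => ?_) (fun m _ => ?_)
  · rw [mem_pi] at hm
    exact mem_piOn.2 ⟨fun i hi => by simpa [hi] using hm i hi, fun i hi => by simp [hi]⟩
  · exact mem_pi.2 fun a ha => (mem_piOn.1 hf).1 a ha
  · funext a ha
    exact dif_pos ha
  · funext i
    by_cases hi : i ∈ C
    · exact dif_pos hi
    · rw [dif_neg hi, (mem_piOn.1 hf).2 i hi]
  · congr
    funext a ha
    exact (dif_pos ha).symm

variable [DecidableEq β]

theorem update_mem_piOn_erase {t : Finset β} {a : β} {C : Finset α} {i : α} {f : α → β}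
    (hi : i ∈ C) (hf : f ∈ piOn C (insert a t)) (hinj : Set.InjOn f C) (hfi : f i = a) :
    Function.update f i default ∈ piOn (C.erase i) t := by
  obtain ⟨hft, hfd⟩ := mem_piOn.1 hf
  refine mem_piOn.2 ⟨fun j hj => ?_, fun j hj => ?_⟩
  · obtain ⟨hji, hjC⟩ := mem_erase.1 hj
    rw [Function.update_of_ne hji]
    exact (mem_insert.1 (hft j hjC)).resolve_left fun h => hji (hinj hjC hi (h.trans hfi.symm))
  · by_cases hji : j = i
    · rw [hji, Function.update_self]
    · rw [Function.update_of_ne hji]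
      exact hfd j fun hjC => hj (mem_erase.2 ⟨hji, hjC⟩)

theorem update_mem_piOn_insert {t : Finset β} {a : β} {C : Finset α} {i : α} {g : α → β}
    (hi : i ∈ C) (hg : g ∈ piOn (C.erase i) t) :
    Function.update g i a ∈ piOn C (insert a t) := by
  obtain ⟨hgt, hgd⟩ := mem_piOn.1 hg
  refine mem_piOn.2 ⟨fun j hj => ?_, fun j hj => ?_⟩
  · by_cases hji : j = i
    · rw [hji, Function.update_self]
      exact mem_insert_self a t
    · rw [Function.update_of_ne hji]
      exact mem_insert_of_mem (hgt j (mem_erase.2 ⟨hji, hj⟩))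
  · rw [Function.update_of_ne (ne_of_mem_of_not_mem hi hj).symm]
    exact hgd j fun h => hj (mem_of_mem_erase h)

noncomputable def injSum (w : β → α → R) (t : Finset β) (C : Finset α) : R :=
  ∑ f ∈ (piOn C t).filter (fun f => Set.InjOn f C), ∏ p ∈ C, w (f p) p

variable (w : β → α → R)

theorem injSum_empty (t : Finset β) : injSum w t ∅ = 1 := by
  have hpi : piOn (∅ : Finset α) t = {fun _ => default} := by
    ext f
    simp only [mem_piOn, notMem_empty, IsEmpty.forall_iff, implies_true, not_false_eq_true,
      forall_const, true_and, mem_singleton]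
    exact funext_iff.symm
  simp [injSum, hpi]

theorem injSum_empty_values {C : Finset α} (hC : C.Nonempty) : injSum w ∅ C = 0 := by
  obtain ⟨i, hi⟩ := hC
  refine sum_eq_zero fun f hf => ?_
  exact absurd ((mem_piOn.1 (mem_filter.1 hf).1).1 i hi) (notMem_empty _)

theorem sum_injOn_apply_eq_injSum_erase_mul {t : Finset β} {a : β} (ha : a ∉ t) {C : Finset α}
    {i : α} (hi : i ∈ C) :
    ∑ f ∈ (piOn C (insert a t)).filter (fun f => Set.InjOn f C ∧ f i = a),
        ∏ p ∈ C, w (f p) p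
      = injSum w t (C.erase i) * w a i := by
  have hC : (C : Set α) = insert i ↑(C.erase i) := by rw [← coe_insert, insert_erase hi]
  rw [injSum, sum_mul]
  refine sum_nbij' (fun f => Function.update f i default) (fun g => Function.update g i a)
    (fun f hf => ?_) (fun g hg => ?_) (fun f hf => ?_) (fun g hg => ?_) (fun f hf => ?_)
  · obtain ⟨hf, hinj, hfi⟩ := mem_filter.1 hf
    have heq : Set.EqOn f (Function.update f i default) ↑(C.erase i) := fun j hj =>
      (Function.update_of_ne (ne_of_mem_erase hj) _ _).symm
    exact mem_filter.2 ⟨update_mem_piOn_erase hi hf hinj hfi, (hinj.mono (by simp)).congr heq⟩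
  · obtain ⟨hg, hinj⟩ := mem_filter.1 hg
    have heq : Set.EqOn g (Function.update g i a) ↑(C.erase i) := fun j hj =>
      (Function.update_of_ne (ne_of_mem_erase hj) _ _).symm
    refine mem_filter.2 ⟨update_mem_piOn_insert hi hg, ?_, Function.update_self _ _ _⟩
    rw [hC, Set.injOn_insert (by simp), Function.update_self]
    refine ⟨hinj.congr heq, ?_⟩
    rintro ⟨j, hj, hja⟩
    rw [← heq hj] at hja
    exact ha (hja ▸ (mem_piOn.1 hg).1 j hj)
  · rw [Function.update_idem, ← (mem_filter.1 hf).2.2, Function.update_eq_self]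
  · rw [Function.update_idem, ← (mem_piOn.1 (mem_filter.1 hg).1).2 i (notMem_erase i C),
      Function.update_eq_self]
  · rw [← prod_erase_mul C _ hi, (mem_filter.1 hf).2.2]
    congr 1
    exact prod_congr rfl fun p hp => by rw [Function.update_of_ne (ne_of_mem_erase hp)]

theorem injSum_insert {t : Finset β} {a : β} (ha : a ∉ t) (C : Finset α) :
    injSum w (insert a t) C = injSum w t C + ∑ i ∈ C, injSum w t (C.erase i) * w a i := by
  have hsplit : ∀ f : α → β, Set.InjOn f C →
      ∏ p ∈ C, w (f p) p = (if ∀ p ∈ C, f p ≠ a then ∏ p ∈ C, w (f p) p else 0)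
        + ∑ i ∈ C, if f i = a then ∏ p ∈ C, w (f p) p else 0 := by
    intro f hf
    by_cases h : ∃ i ∈ C, f i = a
    · obtain ⟨i, hi, hfi⟩ := h
      rw [if_neg fun h' => h' i hi hfi, zero_add, sum_eq_single_of_mem i hi fun j hj hji =>
        if_neg fun hfj => hji (hf hj hi (hfj.trans hfi.symm)), if_pos hfi]
    · push Not at h
      rw [if_pos h, sum_eq_zero fun i hi => if_neg (h i hi), add_zero]
  have havoid : ((piOn C (insert a t)).filter fun f => Set.InjOn f C).filter
      (fun f => ∀ p ∈ C, f p ≠ a) = (piOn C t).filter fun f => Set.InjOn f C := by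
    ext f
    simp only [mem_filter, mem_piOn, mem_insert]
    constructor
    · rintro ⟨⟨⟨ht, hd⟩, hinj⟩, hav⟩
      exact ⟨⟨fun i hi => (ht i hi).resolve_left (hav i hi), hd⟩, hinj⟩
    · rintro ⟨⟨ht, hd⟩, hinj⟩
      exact ⟨⟨⟨fun i hi => Or.inr (ht i hi), hd⟩, hinj⟩,
        fun i hi h => ha (h ▸ ht i hi)⟩
  rw [injSum, sum_congr rfl fun f hf => hsplit f (mem_filter.1 hf).2, sum_add_distrib, sum_comm,
    ← sum_filter, havoid]
  congr 1
  refine sum_congr rfl fun i hi => ?_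
  rw [← sum_filter, filter_filter, sum_injOn_apply_eq_injSum_erase_mul w ha hi]

theorem sum_pi_not_injective_add_injSum (t : Finset β) (C : Finset α) :
    ∑ m ∈ C.pi (fun _ => t),
        (if ¬ (∀ (p : α) (hp : p ∈ C) (q : α) (hq : q ∈ C), m p hp = m q hq → p = q)
         then ∏ p ∈ C.attach, w (m p.1 p.2) p.1 else 0) + injSum w t C
      = ∏ p ∈ C, ∑ m ∈ t, w m p := by
  have htotal : ∏ p ∈ C, ∑ m ∈ t, w m p = ∑ f ∈ piOn C t, ∏ p ∈ C, w (f p) p := by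
    rw [prod_sum, sum_pi_eq_sum_piOn]
    exact sum_congr rfl fun f _ => prod_attach C fun p => w (f p) p
  rw [htotal, injSum, sum_filter, sum_pi_eq_sum_piOn, ← sum_add_distrib]
  refine sum_congr rfl fun f _ => ?_
  rw [prod_attach C fun p => w (f p) p]
  by_cases hf : Set.InjOn f C
  · rw [if_pos hf]
    convert zero_add _
    exact if_neg (not_not_intro fun p hp q hq => @hf p hp q hq)
  · rw [if_neg hf, add_zero]
    exact if_pos fun h => hf fun p hp q hq => h p hp q hq

end InjectiveSums

section Wick

variable {n : ℕ}

noncomputable def firstChaos (c : Fin n → ℝ) : Finset (Fin n) → ℝ :=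
  fun C => ∑ i : Fin n, if C = {i} then c i else 0

theorem wickProd_firstChaos (y : Finset (Fin n) → ℝ) (c : Fin n → ℝ) (C : Finset (Fin n)) :
    wickProd y (firstChaos c) C = ∑ i ∈ C, y (C.erase i) * c i := by
  calc wickProd y (firstChaos c) C
      = ∑ A, ∑ i, if A ∪ {i} = C ∧ Disjoint A {i} then y A * c i else 0 := by
        refine sum_congr rfl fun A _ => ?_
        simp only [firstChaos, mul_sum, mul_ite, mul_zero, ite_sum_zero]
        rw [sum_comm]
        refine sum_congr rfl fun i _ => ?_
        simp only [← ite_and]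
        rw [sum_eq_single_of_mem {i} (mem_univ _) fun B _ hB => if_neg fun h => hB h.2]
        simp only [and_true]
    _ = ∑ i, if i ∈ C then y (C.erase i) * c i else 0 := by
        rw [sum_comm]
        simp only [union_singleton_eq_and_disjoint_iff, ite_and]
        simp
    _ = _ := by rw [sum_ite_mem, univ_inter]

theorem wickProd_homogeneous_firstChaos (k : ℕ) (g : Finset (Fin n) → ℝ) (c : Fin n → ℝ)
    (C : Finset (Fin n)) :
    wickProd (fun A => if A.card = k then g A else 0) (firstChaos c) C
      = if C.card = k + 1 then ∑ i ∈ C, g (C.erase i) * c i else 0 := by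
  have hcard : ∀ i ∈ C, ((C.erase i).card = k ↔ C.card = k + 1) := fun i hi => by
    rw [card_erase_of_mem hi]
    have := card_pos.2 ⟨i, hi⟩
    omega
  rw [wickProd_firstChaos]
  split_ifs with hC
  · exact sum_congr rfl fun i hi => by rw [if_pos ((hcard i hi).2 hC)]
  · exact sum_eq_zero fun i hi => by rw [if_neg (mt (hcard i hi).1 hC), zero_mul]

theorem wickPowC_firstChaos (c : Fin n → ℝ) (k : ℕ) (C : Finset (Fin n)) :
    wickPowC (firstChaos c) k C
      = if C.card = k then (k.factorial : ℝ) * ∏ p ∈ C, c p else 0 := by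
  induction k generalizing C with
  | zero => by_cases hC : C = ∅ <;> simp [wickPowC, hC]
  | succ k ih =>
    rw [wickPowC, funext ih, wickProd_homogeneous_firstChaos]
    refine if_ctx_congr Iff.rfl (fun hC => ?_) fun _ => rfl
    have hterm : ∀ i ∈ C, (k.factorial : ℝ) * (∏ p ∈ C.erase i, c p) * c i
        = k.factorial * ∏ p ∈ C, c p := fun i hi => by
      rw [mul_assoc, prod_erase_mul C c hi]
    rw [sum_congr rfl hterm, sum_const, hC, nsmul_eq_mul, Nat.factorial_succ]
    push_cast
    ring

end Wick

theorem Ueuler_eq_injSum {n : ℕ} (d : ℕ → Fin n → ℝ) (l k : ℕ) (C : Finset (Fin n)) :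
    Ueuler d l k C = if C.card = k then (k.factorial : ℝ) * injSum d (Icc 1 l) C else 0 := by
  induction l generalizing k C with
  | zero =>
    rcases C.eq_empty_or_nonempty with rfl | hC
    · cases k <;> simp [Ueuler, injSum_empty]
    · simp [Ueuler, injSum_empty_values _ hC, hC.ne_empty]
  | succ l ih =>
    cases k with
    | zero =>
      rcases C.eq_empty_or_nonempty with rfl | hC
      · simp [Ueuler, injSum_empty]
      · simp [Ueuler, hC.ne_empty]
    | succ k =>
      change Ueuler d l (k + 1) C + ((k : ℝ) + 1) * wickProd (Ueuler d l k)
        (firstChaos (d (l + 1))) C = _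
      rw [ih, funext (ih k), wickProd_homogeneous_firstChaos,
        ← insert_Icc_right_eq_Icc_add_one (by omega), injSum_insert _ (by simp)]
      split_ifs with hC
      · simp only [mul_assoc, ← mul_sum, Nat.factorial_succ]
        push_cast
        ring
      · ring

theorem sum_Icc_sub_pred {G : Type*} [AddCommGroup G] (f : ℕ → G) (l : ℕ) :
    ∑ m ∈ Icc 1 l, (f m - f (m - 1)) = f l - f 0 := by
  induction l with
  | zero => simp
  | succ l ih => rw [sum_Icc_succ_top (by omega), ih, Nat.add_sub_cancel, sub_add_sub_cancel']

theorem walkC_eq_firstChaos {n : ℕ} {b : Fin n → ℝ} {l : ℕ}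
    (hb : ∀ i : Fin n, l ≤ i → b i = 0) :
    walkC b l = firstChaos b := by
  funext C
  refine sum_congr rfl fun i _ => ?_
  by_cases hi : (i : ℕ) < l
  · simp [hi]
  · simp [hi, hb i (not_lt.1 hi)]

theorem stmt10_general {n : ℕ} (b : ℕ → Fin n → ℝ)
    (hb0 : ∀ i : Fin n, b 0 i = 0)
    (hbsupp : ∀ (r : ℕ) (i : Fin n), r < (i : ℕ) + 1 → b r i = 0)
    (d : ℕ → Fin n → ℝ) (hd : ∀ (r : ℕ) (i : Fin n), d r i = b r i - b (r - 1) i)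
    (k l : ℕ) :
    (∀ p : Fin n, ∑ m ∈ Finset.Icc 1 l, d m p = b l p) ∧
    (∀ C : Finset (Fin n),
      (1 / (k.factorial : ℝ)) * (wickPowC (walkC (b l) l) k C - Ueuler d l k C)
        = if C.card = k ∧ (∀ i ∈ C, (i : ℕ) < l) then
            ∑ m ∈ C.pi (fun _ => Finset.Icc 1 l),
              (if ¬ (∀ (p : Fin n) (hp : p ∈ C) (q : Fin n) (hq : q ∈ C),
                    m p hp = m q hq → p = q)
               then ∏ p ∈ C.attach, d (m p.1 p.2) p.1 else 0)
          else 0) := by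
  have htel : ∀ p, ∑ m ∈ Icc 1 l, d m p = b l p := fun p => by
    simp only [hd]
    rw [sum_Icc_sub_pred (b · p), hb0, sub_zero]
  have hd0 : ∀ (m : ℕ) (p : Fin n), m ≤ p → d m p = 0 := fun m p hm => by
    rw [hd, hbsupp m p (by omega), hbsupp (m - 1) p (by omega), sub_zero]
  refine ⟨htel, fun C => ?_⟩
  rw [walkC_eq_firstChaos fun i hi => hbsupp l i (by omega), wickPowC_firstChaos, Ueuler_eq_injSum]
  by_cases hk : C.card = k
  · rw [if_pos hk, if_pos hk, ← mul_sub, one_div, inv_mul_cancel_left₀ (by positivity),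
      ← prod_congr rfl fun p _ => htel p, ← sum_pi_not_injective_add_injSum,
      add_sub_cancel_right]
    split_ifs with hCl
    -- the two sides differ only in the `Decidable` instance of the injectivity test
    · exact sum_congr rfl fun _ _ => by congr
    · obtain ⟨i, hi, hli⟩ : ∃ i ∈ C, l ≤ (i : ℕ) := by simpa [hk] using hCl
      refine sum_eq_zero fun m hm => ?_
      have hprod : ∏ p ∈ C.attach, d (m p.1 p.2) p.1 = 0 := prod_eq_zero_iff.2
        ⟨⟨i, hi⟩, mem_attach C _, hd0 _ _ ((mem_Icc.1 (mem_pi.1 hm i hi)).2.trans hli)⟩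
      rw [hprod, ite_self]
  · simp [hk]

/-- The difference between the discrete Wick power and its Euler counterpart has Walsh
decomposition
`(1/k!)(B^{H,n}_{l/n})^{⋄ₙk} − (1/k!)U^{k,n}_l
  = Σ_{C⊆{1,…,l},|C|=k} (Σ_{m:C→{1,…,l} not injective} ∏_{p∈C} d^n_{m(p),p}) Ξ^n_C`;
the key identity is that each coordinate sum telescopes: `Σ_{m=1}^l d^n_{m,p} = b^n_{l/n,p}`. -/
theorem stmt10 {n : ℕ} (b : ℕ → Fin n → ℝ)
    (hb0 : ∀ i : Fin n, b 0 i = 0)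
    (hbsupp : ∀ (r : ℕ) (i : Fin n), r < (i : ℕ) + 1 → b r i = 0)
    (d : ℕ → Fin n → ℝ) (hd : ∀ (r : ℕ) (i : Fin n), d r i = b r i - b (r - 1) i)
    (k l : ℕ) (hl : l ≤ n) :
    (∀ p : Fin n, ∑ m ∈ Finset.Icc 1 l, d m p = b l p) ∧
    (∀ C : Finset (Fin n),
      (1 / (k.factorial : ℝ)) * (wickPowC (walkC (b l) l) k C - Ueuler d l k C)
        = if C.card = k ∧ (∀ i ∈ C, (i : ℕ) < l) then
            ∑ m ∈ C.pi (fun _ => Finset.Icc 1 l),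
              (if ¬ (∀ (p : Fin n) (hp : p ∈ C) (q : Fin n) (hq : q ∈ C),
                    m p hp = m q hq → p = q)
               then ∏ p ∈ C.attach, d (m p.1 p.2) p.1 else 0)
          else 0) :=
  stmt10_general b hb0 hbsupp d hd k l
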